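/- Unique decomposition for F: every closed, well-typed, non-value expression e can be uniquely decomposed as e = E[r] where E is an evaluation context and r is a redex. -/
import Mathlib


/-! Core formalization of the functional language F from "FunTAL: Reasonably
Mixing a Functional Language with Assembly": simply-typed call-by-value
language with unit, integers, arithmetic primitives, test-if-zero,
functions, iso-recursive types (fold/unfold) and tuples with projection.
De Bruijn indices are used for term and type variables. -/

namespace FunTAL

/-- F types. `mu` binds type variable 0 (de Bruijn). -/
inductive Ty : Type
  | tvar : ℕ → Ty
  | unit : Ty
  | int : Ty
  | arrow : Ty → Ty → Ty
  | mu : Ty → Ty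
  | prod : List Ty → Ty

-- Substitution of a (closed) type `u` for type variable `k`.
mutual
def substTy (u : Ty) : ℕ → Ty → Ty
  | k, .tvar n => if n = k then u else if k < n then .tvar (n-1) else .tvar n
  | _, .unit => .unit
  | _, .int => .int
  | k, .arrow t1 t2 => .arrow (substTy u k t1) (substTy u k t2)
  | k, .mu t => .mu (substTy u (k+1) t)
  | k, .prod ts => .prod (substTyList u k ts)
def substTyList (u : Ty) : ℕ → List Ty → List Ty
  | _, [] => []
  | k, t :: ts => substTy u k t :: substTyList u k ts
end

/-- Arithmetic primitives. -/
inductive Prim : Type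
  | add | sub | mul
deriving DecidableEq

def Prim.denote : Prim → ℤ → ℤ → ℤ
  | .add, a, b => a + b
  | .sub, a, b => a - b
  | .mul, a, b => a * b

/-- F expressions (de Bruijn indices for term variables). -/
inductive Exp : Type
  | var : ℕ → Exp
  | unit : Exp
  | int : ℤ → Exp
  | prim : Prim → Exp → Exp → Exp
  | if0 : Exp → Exp → Exp → Exp
  | lam : Ty → Exp → Exp
  | app : Exp → Exp → Exp
  | fold : Ty → Exp → Exp
  | unfold : Exp → Exp
  | tuple : List Exp → Exp
  | proj : ℕ → Exp → Exp

/-- Values: unit, integers, lambdas, fold of a value, tuples of values. -/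
inductive Value : Exp → Prop
  | unit : Value .unit
  | int : ∀ n, Value (.int n)
  | lam : ∀ τ b, Value (.lam τ b)
  | fold : ∀ τ v, Value v → Value (.fold τ v)
  | tuple : ∀ vs, (∀ v ∈ vs, Value v) → Value (.tuple vs)

-- Capture-avoiding substitution of a closed value `u` for variable `k`.
mutual
def subst (u : Exp) : ℕ → Exp → Exp
  | k, .var n => if n = k then u else if k < n then .var (n-1) else .var n
  | _, .unit => .unit
  | _, .int n => .int n
  | k, .prim p e1 e2 => .prim p (subst u k e1) (subst u k e2)
  | k, .if0 e e1 e2 => .if0 (subst u k e) (subst u k e1) (subst u k e2)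
  | k, .lam τ b => .lam τ (subst u (k+1) b)
  | k, .app e1 e2 => .app (subst u k e1) (subst u k e2)
  | k, .fold τ e => .fold τ (subst u k e)
  | k, .unfold e => .unfold (subst u k e)
  | k, .tuple es => .tuple (substList u k es)
  | k, .proj i e => .proj i (subst u k e)
def substList (u : Exp) : ℕ → List Exp → List Exp
  | _, [] => []
  | k, e :: es => subst u k e :: substList u k es
end

-- The typing judgment Γ ⊢ e : τ.
mutual
inductive HasType : List Ty → Exp → Ty → Prop
  | var : ∀ {Γ n τ}, Γ[n]? = some τ → HasType Γ (.var n) τ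
  | unit : ∀ {Γ}, HasType Γ .unit .unit
  | int : ∀ {Γ n}, HasType Γ (.int n) .int
  | prim : ∀ {Γ p e1 e2}, HasType Γ e1 .int → HasType Γ e2 .int →
      HasType Γ (.prim p e1 e2) .int
  | if0 : ∀ {Γ e e1 e2 τ}, HasType Γ e .int → HasType Γ e1 τ → HasType Γ e2 τ →
      HasType Γ (.if0 e e1 e2) τ
  | lam : ∀ {Γ τ1 b τ2}, HasType (τ1 :: Γ) b τ2 →
      HasType Γ (.lam τ1 b) (.arrow τ1 τ2)
  | app : ∀ {Γ e1 e2 τ1 τ2}, HasType Γ e1 (.arrow τ1 τ2) → HasType Γ e2 τ1 →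
      HasType Γ (.app e1 e2) τ2
  | fold : ∀ {Γ e τ}, HasType Γ e (substTy (.mu τ) 0 τ) →
      HasType Γ (.fold (.mu τ) e) (.mu τ)
  | unfold : ∀ {Γ e τ}, HasType Γ e (.mu τ) →
      HasType Γ (.unfold e) (substTy (.mu τ) 0 τ)
  | tuple : ∀ {Γ es τs}, HasTypeList Γ es τs → HasType Γ (.tuple es) (.prod τs)
  | proj : ∀ {Γ e τs i τ}, HasType Γ e (.prod τs) → τs[i]? = some τ →
      HasType Γ (.proj i e) τ
inductive HasTypeList : List Ty → List Exp → List Ty → Prop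
  | nil : ∀ {Γ}, HasTypeList Γ [] []
  | cons : ∀ {Γ e τ es τs}, HasType Γ e τ → HasTypeList Γ es τs →
      HasTypeList Γ (e :: es) (τ :: τs)
end

/-- Evaluation contexts enforcing left-to-right call-by-value evaluation. -/
inductive ECtx : Type
  | hole : ECtx
  | prim1 : Prim → ECtx → Exp → ECtx
  | prim2 : Prim → ∀ v : Exp, Value v → ECtx → ECtx
  | if0C : ECtx → Exp → Exp → ECtx
  | app1 : ECtx → Exp → ECtx
  | app2 : ∀ v : Exp, Value v → ECtx → ECtx
  | foldC : Ty → ECtx → ECtx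
  | unfoldC : ECtx → ECtx
  | tupleC : ∀ vs : List Exp, (∀ v ∈ vs, Value v) → ECtx → List Exp → ECtx
  | projC : ℕ → ECtx → ECtx

/-- Plugging an expression into an evaluation context. -/
def plug : ECtx → Exp → Exp
  | .hole, e => e
  | .prim1 p E e2, e => .prim p (plug E e) e2
  | .prim2 p v _ E, e => .prim p v (plug E e)
  | .if0C E e1 e2, e => .if0 (plug E e) e1 e2
  | .app1 E e2, e => .app (plug E e) e2
  | .app2 v _ E, e => .app v (plug E e)
  | .foldC τ E, e => .fold τ (plug E e)
  | .unfoldC E, e => .unfold (plug E e)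
  | .tupleC vs _ E es, e => .tuple (vs ++ plug E e :: es)
  | .projC i E, e => .proj i (plug E e)

/-- Primitive reduction steps (redex contractions). -/
inductive HeadStep : Exp → Exp → Prop
  | beta : ∀ τ b v, Value v → HeadStep (.app (.lam τ b) v) (subst v 0 b)
  | prim : ∀ p n1 n2, HeadStep (.prim p (.int n1) (.int n2)) (.int (p.denote n1 n2))
  | if0_true : ∀ e1 e2, HeadStep (.if0 (.int 0) e1 e2) e1
  | if0_false : ∀ n e1 e2, n ≠ 0 → HeadStep (.if0 (.int n) e1 e2) e2
  | unfold_fold : ∀ τ v, Value v → HeadStep (.unfold (.fold τ v)) v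
  | proj : ∀ vs i v, (∀ w ∈ vs, Value w) → vs[i]? = some v →
      HeadStep (.proj i (.tuple vs)) v

/-- A redex is an expression that can take a primitive reduction step. -/
def Redex (e : Exp) : Prop := ∃ e', HeadStep e e'

/-- The small-step call-by-value operational semantics: reduce a redex
inside an evaluation context. -/
inductive Step : Exp → Exp → Prop
  | mk : ∀ (E : ECtx) (r r' : Exp), HeadStep r r' → Step (plug E r) (plug E r')


theorem redex_not_value {r : Exp} (hr : Redex r) : ¬ Value r := by
  rintro hv; obtain ⟨_, hs⟩ := hr; cases hs <;> cases hv

theorem plug_not_value {r : Exp} (hr : Redex r) : ∀ E, ¬ Value (plug E r) := by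
  intro E
  induction E with
  | hole => exact redex_not_value hr
  | prim1 _ _ _ _ => intro hv; cases hv
  | prim2 _ _ _ _ _ => intro hv; cases hv
  | if0C _ _ _ _ => intro hv; cases hv
  | app1 _ _ _ => intro hv; cases hv
  | app2 _ _ _ _ => intro hv; cases hv
  | foldC _ _ ih => intro hv; cases hv with | fold _ _ h => exact ih h
  | unfoldC _ _ => intro hv; cases hv
  | tupleC vs hvs E es ih =>
      intro hv; cases hv with
      | tuple _ h => exact ih (h _ (by simp [plug]))
  | projC _ _ _ => intro hv; cases hv

theorem ht_len : ∀ {Γ} es τs, HasTypeList Γ es τs → es.length = τs.length := by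
  intro Γ es
  induction es with
  | nil => intro τs h; cases h; rfl
  | cons e es ih => intro τs h; cases h with | cons _ hl => simp [ih _ hl]

theorem canInt {v : Exp} (h : HasType [] v .int) (hv : Value v) : ∃ n, v = .int n := by
  cases hv <;> cases h; exact ⟨_, rfl⟩

theorem canArrow {v : Exp} {τ1 τ2} (h : HasType [] v (.arrow τ1 τ2)) (hv : Value v) :
    ∃ τ b, v = .lam τ b := by
  cases hv <;> cases h; exact ⟨_, _, rfl⟩

theorem canMu {v : Exp} {σ} (h : HasType [] v (.mu σ)) (hv : Value v) :
    ∃ τ w, v = .fold τ w ∧ Value w := by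
  cases hv with
  | fold τ w hw => exact ⟨τ, w, rfl, hw⟩
  | _ => cases h

theorem canProd {v : Exp} {τs} (h : HasType [] v (.prod τs)) (hv : Value v) :
    ∃ vs, v = .tuple vs ∧ (∀ w ∈ vs, Value w) ∧ vs.length = τs.length := by
  cases hv with
  | tuple vs hvs => cases h with | tuple hl => exact ⟨vs, rfl, hvs, ht_len _ _ hl⟩
  | _ => cases h
mutual
theorem progress : ∀ (e : Exp) (τ : Ty), HasType [] e τ →
    Value e ∨ ∃ E r, Redex r ∧ e = plug E r := by
  intro e
  match e with
  | .var n => intro τ h; cases h with | var hn => simp at hn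
  | .unit => exact fun _ _ => Or.inl .unit
  | .int n => exact fun _ _ => Or.inl (.int n)
  | .lam τ b => exact fun _ _ => Or.inl (.lam τ b)
  | .prim p e1 e2 =>
      intro τ h
      cases h with
      | prim h1 h2 =>
        right
        rcases progress e1 _ h1 with hv1 | ⟨E, r, hr, rfl⟩
        · obtain ⟨n1, rfl⟩ := canInt h1 hv1
          rcases progress e2 _ h2 with hv2 | ⟨E, r, hr, rfl⟩
          · obtain ⟨n2, rfl⟩ := canInt h2 hv2
            exact ⟨.hole, _, ⟨_, .prim p n1 n2⟩, rfl⟩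
          · exact ⟨.prim2 p _ (.int n1) E, r, hr, rfl⟩
        · exact ⟨.prim1 p E e2, r, hr, rfl⟩
  | .if0 e e1 e2 =>
      intro τ h
      cases h with
      | if0 h0 h1 h2 =>
        right
        rcases progress e _ h0 with hv | ⟨E, r, hr, rfl⟩
        · obtain ⟨n, rfl⟩ := canInt h0 hv
          by_cases hn : n = 0
          · subst hn; exact ⟨.hole, _, ⟨_, .if0_true e1 e2⟩, rfl⟩
          · exact ⟨.hole, _, ⟨_, .if0_false n e1 e2 hn⟩, rfl⟩
        · exact ⟨.if0C E e1 e2, r, hr, rfl⟩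
  | .app e1 e2 =>
      intro τ h
      cases h with
      | app h1 h2 =>
        right
        rcases progress e1 _ h1 with hv1 | ⟨E, r, hr, rfl⟩
        · obtain ⟨σ, b, rfl⟩ := canArrow h1 hv1
          rcases progress e2 _ h2 with hv2 | ⟨E, r, hr, rfl⟩
          · exact ⟨.hole, _, ⟨_, .beta σ b e2 hv2⟩, rfl⟩
          · exact ⟨.app2 _ (.lam σ b) E, r, hr, rfl⟩
        · exact ⟨.app1 E e2, r, hr, rfl⟩
  | .fold σ e =>
      intro τ h
      cases h with
      | fold h1 =>
        rcases progress e _ h1 with hv | ⟨E, r, hr, rfl⟩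
        · exact Or.inl (.fold _ _ hv)
        · exact Or.inr ⟨.foldC _ E, r, hr, rfl⟩
  | .unfold e =>
      intro τ h
      cases h with
      | unfold h1 =>
        right
        rcases progress e _ h1 with hv | ⟨E, r, hr, rfl⟩
        · obtain ⟨σ, w, rfl, hw⟩ := canMu h1 hv
          exact ⟨.hole, _, ⟨_, .unfold_fold σ w hw⟩, rfl⟩
        · exact ⟨.unfoldC E, r, hr, rfl⟩
  | .tuple es =>
      intro τ h
      cases h with
      | tuple hl =>
        rcases progressList es _ hl with hv | ⟨vs, E, r, rest, hr, heq, hvs⟩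
        · exact Or.inl (.tuple es hv)
        · exact Or.inr ⟨.tupleC vs hvs E rest, r, hr, by simp [plug, heq]⟩
  | .proj i e =>
      intro τ h
      cases h with
      | proj h1 hi =>
        right
        rcases progress e _ h1 with hv | ⟨E, r, hr, rfl⟩
        · obtain ⟨vs, rfl, hvs, hlen⟩ := canProd h1 hv
          have : i < vs.length := by
            rw [hlen]; exact (List.getElem?_eq_some_iff.mp hi).1
          exact ⟨.hole, _, ⟨_, .proj vs i _ hvs (List.getElem?_eq_some_iff.mpr ⟨this, rfl⟩)⟩, rfl⟩
        · exact ⟨.projC i E, r, hr, rfl⟩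

theorem progressList : ∀ (es : List Exp) (τs : List Ty), HasTypeList [] es τs →
    (∀ v ∈ es, Value v) ∨
      ∃ vs E r rest, Redex r ∧ es = vs ++ plug E r :: rest ∧ ∀ v ∈ vs, Value v := by
  intro es
  match es with
  | [] => exact fun _ _ => Or.inl (by simp)
  | e :: es =>
      intro τs h
      cases h with
      | cons h1 hl =>
        rcases progress e _ h1 with hv | ⟨E, r, hr, rfl⟩
        · rcases progressList es _ hl with hvs | ⟨vs, E, r, rest, hr, heq, hvs⟩
          · exact Or.inl (by simp_all)
          · refine Or.inr ⟨e :: vs, E, r, rest, hr, by simp [heq], ?_⟩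
            simp_all
        · exact Or.inr ⟨[], E, r, es, hr, rfl, by simp⟩
end
theorem split_unique : ∀ (l1 l1' : List Exp) (a a' : Exp) (l2 l2' : List Exp),
    (∀ v ∈ l1, Value v) → (∀ v ∈ l1', Value v) → ¬ Value a → ¬ Value a' →
    l1 ++ a :: l2 = l1' ++ a' :: l2' → l1 = l1' ∧ a = a' ∧ l2 = l2' := by
  intro l1
  induction l1 with
  | nil =>
      intro l1' a a' l2 l2' _ h1' ha ha' heq
      cases l1' with
      | nil => simpa using heq
      | cons b l1' =>
          simp at heq
          exact absurd (heq.1 ▸ h1' b (by simp)) ha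
  | cons b l1 ih =>
      intro l1' a a' l2 l2' h1 h1' ha ha' heq
      cases l1' with
      | nil =>
          simp at heq
          exact absurd (heq.1 ▸ h1 b (by simp)) ha'
      | cons b' l1' =>
          simp only [List.cons_append, List.cons.injEq] at heq
          obtain ⟨rfl, heq⟩ := heq
          obtain ⟨h1, h2, h3⟩ := ih l1' a a' l2 l2'
            (fun v hv => h1 v (by simp [hv])) (fun v hv => h1' v (by simp [hv])) ha ha' heq
          exact ⟨by rw [h1], h2, h3⟩

theorem plug_inj : ∀ (E E' : ECtx) (r r' : Exp), Redex r → Redex r' →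
    plug E r = plug E' r' → E = E' ∧ r = r' := by
  intro E
  induction E with
  | hole =>
      intro E' r r' hr hr' heq
      cases E' with
      | hole => exact ⟨rfl, heq⟩
      | prim1 p E2 e2 =>
          obtain ⟨_, hs⟩ := hr; cases hs <;> simp [plug] at heq
          exact absurd (heq.2.1 ▸ Value.int _) (plug_not_value hr' E2)
      | prim2 p v hv E2 =>
          obtain ⟨_, hs⟩ := hr; cases hs <;> simp [plug] at heq
          exact absurd (heq.2.2 ▸ Value.int _) (plug_not_value hr' E2)
      | if0C E2 e1 e2 =>
          obtain ⟨_, hs⟩ := hr; cases hs <;> simp [plug] at heq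
          · exact absurd (heq.1 ▸ Value.int _) (plug_not_value hr' E2)
          · exact absurd (heq.1 ▸ Value.int _) (plug_not_value hr' E2)
      | app1 E2 e2 =>
          obtain ⟨_, hs⟩ := hr; cases hs <;> simp [plug] at heq
          exact absurd (heq.1 ▸ Value.lam _ _) (plug_not_value hr' E2)
      | app2 v hv E2 =>
          obtain ⟨_, hs⟩ := hr
          cases hs with
          | beta τ b w hw =>
              simp [plug] at heq
              exact absurd (heq.2 ▸ hw) (plug_not_value hr' E2)
          | _ => simp [plug] at heq
      | foldC σ E2 =>
          obtain ⟨_, hs⟩ := hr; cases hs <;> simp [plug] at heq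
      | unfoldC E2 =>
          obtain ⟨_, hs⟩ := hr
          cases hs with
          | unfold_fold σ w hw =>
              simp [plug] at heq
              exact absurd (heq ▸ Value.fold σ _ hw) (plug_not_value hr' E2)
          | _ => simp [plug] at heq
      | tupleC vs hvs E2 es =>
          obtain ⟨_, hs⟩ := hr
          cases hs with
          | proj ws i w hws hi => simp [plug] at heq
          | _ => simp [plug] at heq
      | projC i E2 =>
          obtain ⟨_, hs⟩ := hr
          cases hs with
          | proj ws i w hws hi =>
              simp [plug] at heq
              exact absurd (heq.2 ▸ Value.tuple ws hws) (plug_not_value hr' E2)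
          | _ => simp [plug] at heq
  | prim1 p E1 e2 ih =>
      intro E' r r' hr hr' heq
      cases E' with
      | hole =>
          obtain ⟨_, hs⟩ := hr'; cases hs <;> simp [plug] at heq
          exact absurd (heq.2.1 ▸ Value.int _) (plug_not_value hr E1)
      | prim1 q E2 e2' =>
          simp [plug] at heq
          obtain ⟨rfl, heq1, rfl⟩ := heq
          obtain ⟨rfl, rfl⟩ := ih E2 r r' hr hr' heq1
          exact ⟨rfl, rfl⟩
      | prim2 q v hv E2 =>
          simp [plug] at heq
          exact absurd (heq.2.1 ▸ hv) (plug_not_value hr E1)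
      | _ => simp [plug] at heq
  | prim2 p v hv E1 ih =>
      intro E' r r' hr hr' heq
      cases E' with
      | hole =>
          obtain ⟨_, hs⟩ := hr'; cases hs <;> simp [plug] at heq
          exact absurd (heq.2.2 ▸ Value.int _) (plug_not_value hr E1)
      | prim1 q E2 e2' =>
          simp [plug] at heq
          exact absurd (heq.2.1.symm ▸ hv) (plug_not_value hr' E2)
      | prim2 q w hw E2 =>
          simp [plug] at heq
          obtain ⟨rfl, rfl, heq1⟩ := heq
          obtain ⟨rfl, rfl⟩ := ih E2 r r' hr hr' heq1
          exact ⟨rfl, rfl⟩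
      | _ => simp [plug] at heq
  | if0C E1 e1 e2 ih =>
      intro E' r r' hr hr' heq
      cases E' with
      | hole =>
          obtain ⟨_, hs⟩ := hr'; cases hs <;> simp [plug] at heq
          · exact absurd (heq.1 ▸ Value.int _) (plug_not_value hr E1)
          · exact absurd (heq.1 ▸ Value.int _) (plug_not_value hr E1)
      | if0C E2 e1' e2' =>
          simp [plug] at heq
          obtain ⟨heq1, rfl, rfl⟩ := heq
          obtain ⟨rfl, rfl⟩ := ih E2 r r' hr hr' heq1
          exact ⟨rfl, rfl⟩
      | _ => simp [plug] at heq
  | app1 E1 e2 ih =>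
      intro E' r r' hr hr' heq
      cases E' with
      | hole =>
          obtain ⟨_, hs⟩ := hr'; cases hs <;> simp [plug] at heq
          exact absurd (heq.1 ▸ Value.lam _ _) (plug_not_value hr E1)
      | app1 E2 e2' =>
          simp [plug] at heq
          obtain ⟨heq1, rfl⟩ := heq
          obtain ⟨rfl, rfl⟩ := ih E2 r r' hr hr' heq1
          exact ⟨rfl, rfl⟩
      | app2 v hv E2 =>
          simp [plug] at heq
          exact absurd (heq.1.symm ▸ hv) (plug_not_value hr E1)
      | _ => simp [plug] at heq
  | app2 v hv E1 ih =>
      intro E' r r' hr hr' heq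
      cases E' with
      | hole =>
          obtain ⟨_, hs⟩ := hr'
          cases hs with
          | beta τ b w hw =>
              simp [plug] at heq
              exact absurd (heq.2 ▸ hw) (plug_not_value hr E1)
          | _ => simp [plug] at heq
      | app1 E2 e2' =>
          simp [plug] at heq
          exact absurd (heq.1 ▸ hv) (plug_not_value hr' E2)
      | app2 w hw E2 =>
          simp [plug] at heq
          obtain ⟨rfl, heq1⟩ := heq
          obtain ⟨rfl, rfl⟩ := ih E2 r r' hr hr' heq1
          exact ⟨rfl, rfl⟩
      | _ => simp [plug] at heq
  | foldC σ E1 ih =>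
      intro E' r r' hr hr' heq
      cases E' with
      | hole =>
          obtain ⟨_, hs⟩ := hr'; cases hs <;> simp [plug] at heq
      | foldC σ' E2 =>
          simp [plug] at heq
          obtain ⟨rfl, heq1⟩ := heq
          obtain ⟨rfl, rfl⟩ := ih E2 r r' hr hr' heq1
          exact ⟨rfl, rfl⟩
      | _ => simp [plug] at heq
  | unfoldC E1 ih =>
      intro E' r r' hr hr' heq
      cases E' with
      | hole =>
          obtain ⟨_, hs⟩ := hr'
          cases hs with
          | unfold_fold σ w hw =>
              simp [plug] at heq
              exact absurd (heq ▸ Value.fold σ _ hw) (plug_not_value hr E1)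
          | _ => simp [plug] at heq
      | unfoldC E2 =>
          simp [plug] at heq
          obtain ⟨rfl, rfl⟩ := ih E2 r r' hr hr' heq
          exact ⟨rfl, rfl⟩
      | _ => simp [plug] at heq
  | tupleC vs hvs E1 es ih =>
      intro E' r r' hr hr' heq
      cases E' with
      | hole =>
          obtain ⟨_, hs⟩ := hr'; cases hs <;> simp [plug] at heq
      | tupleC vs' hvs' E2 es' =>
          simp only [plug, Exp.tuple.injEq] at heq
          obtain ⟨rfl, heq1, rfl⟩ := split_unique vs vs' _ _ es es' hvs hvs'
            (plug_not_value hr E1) (plug_not_value hr' E2) heq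
          obtain ⟨rfl, rfl⟩ := ih E2 r r' hr hr' heq1
          exact ⟨rfl, rfl⟩
      | _ => simp [plug] at heq
  | projC i E1 ih =>
      intro E' r r' hr hr' heq
      cases E' with
      | hole =>
          obtain ⟨_, hs⟩ := hr'
          cases hs with
          | proj ws j w hws hj =>
              simp [plug] at heq
              exact absurd (heq.2 ▸ Value.tuple ws hws) (plug_not_value hr E1)
          | _ => simp [plug] at heq
      | projC j E2 =>
          simp [plug] at heq
          obtain ⟨rfl, heq1⟩ := heq
          obtain ⟨rfl, rfl⟩ := ih E2 r r' hr hr' heq1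
          exact ⟨rfl, rfl⟩
      | _ => simp [plug] at heq
/-- **Unique decomposition** for F: every closed, well-typed, non-value
expression decomposes uniquely as `E[r]` with `E` an evaluation context and
`r` a redex. -/
theorem unique_decomposition (e : Exp) (τ : Ty) (h : HasType [] e τ)
    (hnv : ¬ Value e) :
    ∃! p : ECtx × Exp, Redex p.2 ∧ e = plug p.1 p.2 := by
  obtain ⟨E, r, hr, rfl⟩ := (progress e τ h).resolve_left hnv
  refine ⟨(E, r), ⟨hr, rfl⟩, ?_⟩
  rintro ⟨E', r'⟩ ⟨hr', heq⟩
  obtain ⟨rfl, rfl⟩ := plug_inj E' E r' r hr' hr heq.symm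
  rfl

end FunTAL
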